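/- arXiv:1401.0325 — 6 statements merged into one kernel-verified Lean document; each statement's English description precedes it below -/
import Mathlib

section
/- Let W : ℝ → ℝ be continuous, G : ℝ → ℝ differentiable with G(x) > 0, and let c, c₂, c₃ ∈ ℝ. Define u(x,t) = ∫₀ᵗ W(s) ds + log(c·∫₀ˣ 1/G(y) dy + c₂) + c₃, where c·∫₀ˣ 1/G(y) dy + c₂ > 0 on the domain considered. Then u satisfies the PDE u_t = ∂ₓ(G(x)·e^u·u_x) + W(t). -/
/-!
With `F x = ∫₀ˣ 1/G`, the spatial part `log (c F x + c₂)` has `u_x = c / (G (c F + c₂))`, so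
the flux `G e^u u_x = c e^{∫₀ᵗ W + c₃}` does not depend on `x` and `(G e^u u_x)_x = 0`; the time
part `∫₀ᵗ W` contributes `u_t = W t` by the fundamental theorem of calculus.
-/

open Real Filter Topology

theorem hasDerivAt_log_affine_primitive {h : ℝ → ℝ} (hh : Continuous h) (c c₂ : ℝ) {x : ℝ}
    (hx : 0 < c * (∫ y in (0:ℝ)..x, h y) + c₂) :
    HasDerivAt (fun x' => log (c * (∫ y in (0:ℝ)..x', h y) + c₂))
      (c * h x / (c * (∫ y in (0:ℝ)..x, h y) + c₂)) x :=
  (((hh.integral_hasStrictDerivAt 0 x).hasDerivAt.const_mul c).add_const c₂).log hx.ne'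

theorem isOpen_setOf_affine_primitive_pos {h : ℝ → ℝ} (hh : Continuous h) (c c₂ : ℝ) :
    IsOpen {x | 0 < c * (∫ y in (0:ℝ)..x, h y) + c₂} :=
  isOpen_lt continuous_const <|
    (continuous_const.mul (intervalIntegral.continuous_primitive hh.intervalIntegrable 0)).add
      continuous_const

/-- Additive separated solution of `u_t = (G(x) e^u u_x)_x + W(t)` for
exponential diffusivity `A(u) = e^u`. -/
theorem stmt_0 (W G : ℝ → ℝ) (hW : Continuous W) (hG : Differentiable ℝ G)
    (hGpos : ∀ x, 0 < G x) (c c₂ c₃ : ℝ)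
    (u : ℝ → ℝ → ℝ)
    (hu : ∀ x t, u x t =
      (∫ s in (0:ℝ)..t, W s) + Real.log (c * (∫ y in (0:ℝ)..x, 1 / G y) + c₂) + c₃) :
    ∀ x t, 0 < c * (∫ y in (0:ℝ)..x, 1 / G y) + c₂ →
      deriv (fun t' => u x t') t =
        deriv (fun x' => G x' * Real.exp (u x' t) * deriv (fun y => u y t) x') x + W t := by
  intro x t hpos
  have hGinv : Continuous fun y => 1 / G y :=
    continuous_const.div hG.continuous fun y => (hGpos y).ne'
  have hut : HasDerivAt (fun t' => u x t') (W t) t := by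
    refine ((hW.integral_hasStrictDerivAt 0 t).hasDerivAt.add_const
      (log (c * (∫ y in (0:ℝ)..x, 1 / G y) + c₂) + c₃)).congr_of_eventuallyEq
      (.of_forall fun t' => ?_)
    simp only [hu]; ring
  have hflux : (fun x' => G x' * exp (u x' t) * deriv (fun y => u y t) x') =ᶠ[𝓝 x]
      fun _ => c * exp ((∫ s in (0:ℝ)..t, W s) + c₃) := by
    filter_upwards [(isOpen_setOf_affine_primitive_pos hGinv c c₂).mem_nhds hpos] with z hz
    have hux : HasDerivAt (fun y => u y t)
        (c * (1 / G z) / (c * (∫ y in (0:ℝ)..z, 1 / G y) + c₂)) z := by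
      refine ((hasDerivAt_log_affine_primitive hGinv c c₂ hz).const_add
        ((∫ s in (0:ℝ)..t, W s) + c₃)).congr_of_eventuallyEq (.of_forall fun y => ?_)
      simp only [hu]; ring
    rw [hux.deriv, hu]
    simp only [exp_add, exp_log hz]
    field_simp [(hGpos z).ne']
  rw [hut.deriv, hflux.deriv_eq, deriv_const, zero_add]
end

section
/- Let c₅, c₆ ∈ ℝ with c₅ ≠ 0, and define u(x,t) = t·f(xt) where f(φ) = c₅ / (−φ + c₆·φ·e^{c₅/φ}). Then on any open region where xt ≠ 0 and the denominator −φ + c₆·φ·e^{c₅/φ} is nonzero, u satisfies the PDE u_t = (x² u^{-1} u_x)_x + 1. -/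
noncomputable def Dd (c₅ c₆ φ : ℝ) : ℝ := -φ + c₆ * φ * Real.exp (c₅ / φ)
noncomputable def Dp (c₅ c₆ φ : ℝ) : ℝ :=
  -1 + c₆ * Real.exp (c₅ / φ) - c₆ * c₅ / φ * Real.exp (c₅ / φ)
noncomputable def Dpp (c₅ c₆ φ : ℝ) : ℝ := c₆ * c₅ ^ 2 / φ ^ 3 * Real.exp (c₅ / φ)
noncomputable def Fp (c₅ c₆ φ : ℝ) : ℝ := -(c₅ * Dp c₅ c₆ φ) / Dd c₅ c₆ φ ^ 2
noncomputable def Fpp (c₅ c₆ φ : ℝ) : ℝ :=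
  (-(c₅ * Dpp c₅ c₆ φ) * Dd c₅ c₆ φ ^ 2 + c₅ * Dp c₅ c₆ φ * (2 * Dd c₅ c₆ φ * Dp c₅ c₆ φ)) /
    (Dd c₅ c₆ φ ^ 2) ^ 2

lemma hasDerivAt_E (c₅ : ℝ) {φ : ℝ} (hφ : φ ≠ 0) :
    HasDerivAt (fun y => Real.exp (c₅ / y)) (Real.exp (c₅ / φ) * (c₅ * -(φ ^ 2)⁻¹)) φ := by
  have h := ((hasDerivAt_inv hφ).const_mul c₅).exp
  simpa [div_eq_mul_inv] using h

lemma hasDerivAt_D (c₅ c₆ : ℝ) {φ : ℝ} (hφ : φ ≠ 0) :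
    HasDerivAt (fun y => Dd c₅ c₆ y) (Dp c₅ c₆ φ) φ := by
  have h := ((hasDerivAt_id φ).neg).add
    (((hasDerivAt_id φ).const_mul c₆).mul (hasDerivAt_E c₅ hφ))
  have hval : -1 + (c₆ * 1 * Real.exp (c₅ / φ) +
      c₆ * φ * (Real.exp (c₅ / φ) * (c₅ * -(φ ^ 2)⁻¹))) = Dp c₅ c₆ φ := by
    simp only [Dp]; field_simp; ring
  rw [← hval]
  exact h

lemma hasDerivAt_Dp (c₅ c₆ : ℝ) {φ : ℝ} (hφ : φ ≠ 0) :
    HasDerivAt (fun y => Dp c₅ c₆ y) (Dpp c₅ c₆ φ) φ := by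
  have h := (((hasDerivAt_E c₅ hφ).const_mul c₆).sub
    (((hasDerivAt_inv hφ).const_mul (c₆ * c₅)).mul (hasDerivAt_E c₅ hφ))).const_add (-1)
  have hfun : (fun y => -1 + (c₆ * Real.exp (c₅ / y) -
      c₆ * c₅ * y⁻¹ * Real.exp (c₅ / y))) = fun y => Dp c₅ c₆ y := by
    funext y; simp only [Dp]; ring
  have hval : c₆ * (Real.exp (c₅ / φ) * (c₅ * -(φ ^ 2)⁻¹)) -
      (c₆ * c₅ * -(φ ^ 2)⁻¹ * Real.exp (c₅ / φ) +
        c₆ * c₅ * φ⁻¹ * (Real.exp (c₅ / φ) * (c₅ * -(φ ^ 2)⁻¹))) = Dpp c₅ c₆ φ := by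
    simp only [Dpp]; field_simp; ring
  rw [← hfun, ← hval]
  exact h

lemma hasDerivAt_f (c₅ c₆ : ℝ) {φ : ℝ} (hφ : φ ≠ 0) (hD : Dd c₅ c₆ φ ≠ 0) :
    HasDerivAt (fun y => c₅ / Dd c₅ c₆ y) (Fp c₅ c₆ φ) φ := by
  have h := (hasDerivAt_const φ c₅).div (hasDerivAt_D c₅ c₆ hφ) hD
  have hval : (0 * Dd c₅ c₆ φ - c₅ * Dp c₅ c₆ φ) / Dd c₅ c₆ φ ^ 2 = Fp c₅ c₆ φ := by
    simp only [Fp]; ring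
  rw [← hval]
  exact h

lemma hasDerivAt_Fp (c₅ c₆ : ℝ) {φ : ℝ} (hφ : φ ≠ 0) (hD : Dd c₅ c₆ φ ≠ 0) :
    HasDerivAt (fun y => Fp c₅ c₆ y) (Fpp c₅ c₆ φ) φ := by
  have hnum : HasDerivAt (fun y => -(c₅ * Dp c₅ c₆ y)) (-(c₅ * Dpp c₅ c₆ φ)) φ :=
    ((hasDerivAt_Dp c₅ c₆ hφ).const_mul c₅).neg
  have hden : HasDerivAt (fun y => Dd c₅ c₆ y ^ 2) (2 * Dd c₅ c₆ φ * Dp c₅ c₆ φ) φ := by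
    simpa using (hasDerivAt_D c₅ c₆ hφ).fun_pow 2
  have h := hnum.div hden (pow_ne_zero 2 hD)
  have hval : (-(c₅ * Dpp c₅ c₆ φ) * Dd c₅ c₆ φ ^ 2 -
      -(c₅ * Dp c₅ c₆ φ) * (2 * Dd c₅ c₆ φ * Dp c₅ c₆ φ)) / (Dd c₅ c₆ φ ^ 2) ^ 2 =
      Fpp c₅ c₆ φ := by
    simp only [Fpp]; ring
  rw [← hval]
  exact h

/-- Two-parameter focussing solution `u = t f(xt)`,
`f(φ) = c₅/(-φ + c₆ φ e^{c₅/φ})`, of `u_t = (x² u⁻¹ u_x)_x + 1`. -/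
theorem stmt_1 (c₅ c₆ : ℝ) (hc₅ : c₅ ≠ 0) (f : ℝ → ℝ)
    (hf : ∀ φ, f φ = c₅ / (-φ + c₆ * φ * Real.exp (c₅ / φ)))
    (u : ℝ → ℝ → ℝ) (hu : ∀ x t, u x t = t * f (x * t)) :
    ∀ x t, x * t ≠ 0 → (-(x * t) + c₆ * (x * t) * Real.exp (c₅ / (x * t))) ≠ 0 →
      deriv (fun t' => u x t') t =
        deriv (fun x' => x' ^ 2 * (u x' t)⁻¹ * deriv (fun y => u y t) x') x + 1 := by
  intro x t hxt hD0
  have ht : t ≠ 0 := right_ne_zero_of_mul hxt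
  have hx : x ≠ 0 := left_ne_zero_of_mul hxt
  have hDxt : Dd c₅ c₆ (x * t) ≠ 0 := hD0
  have hfu : ∀ y s, u y s = s * (c₅ / Dd c₅ c₆ (y * s)) := by
    intro y s; rw [hu, hf]; rfl
  -- LHS
  have hL : HasDerivAt (fun t' => t' * (c₅ / Dd c₅ c₆ (x * t')))
      (1 * (c₅ / Dd c₅ c₆ (x * t)) + t * (Fp c₅ c₆ (x * t) * (x * 1))) t :=
    (hasDerivAt_id t).mul
      ((hasDerivAt_f c₅ c₆ hxt hDxt).comp t ((hasDerivAt_id t).const_mul x))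
  have heqL : (fun t' => u x t') = fun t' => t' * (c₅ / Dd c₅ c₆ (x * t')) :=
    funext fun t' => hfu x t'
  rw [heqL, hL.deriv]
  -- RHS : eventual equality to a closed form
  have hcont1 : ContinuousAt (fun x' => x' * t) x := by fun_prop
  have hcontD : ContinuousAt (fun x' => Dd c₅ c₆ (x' * t)) x := by
    show ContinuousAt ((fun φ => Dd c₅ c₆ φ) ∘ fun x' => x' * t) x
    exact ContinuousAt.comp (hasDerivAt_D c₅ c₆ hxt).continuousAt hcont1
  have hev : (fun x' => x' ^ 2 * (u x' t)⁻¹ * deriv (fun y => u y t) x') =ᶠ[nhds x]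
      (fun x' => x' ^ 2 * (t * (c₅ / Dd c₅ c₆ (x' * t)))⁻¹ *
        (t * (Fp c₅ c₆ (x' * t) * (1 * t)))) := by
    filter_upwards [hcont1.eventually_ne hxt, hcontD.eventually_ne hDxt] with x' h1 h2
    have hd : HasDerivAt (fun y => t * (c₅ / Dd c₅ c₆ (y * t)))
        (t * (Fp c₅ c₆ (x' * t) * (1 * t))) x' :=
      by have h := ((hasDerivAt_f c₅ c₆ h1 h2).comp x' ((hasDerivAt_id x').mul_const t)).const_mul t; exact h
    have heq : (fun y => u y t) = fun y => t * (c₅ / Dd c₅ c₆ (y * t)) :=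
      funext fun y => hfu y t
    rw [hfu, heq, hd.deriv]
  rw [hev.deriv_eq]
  -- differentiate the closed form
  have h1 : HasDerivAt (fun x' : ℝ => x' ^ 2) (2 * x) x := by
    simpa using hasDerivAt_pow 2 x
  have hfx : HasDerivAt (fun x' => t * (c₅ / Dd c₅ c₆ (x' * t)))
      (t * (Fp c₅ c₆ (x * t) * (1 * t))) x :=
    by have h := ((hasDerivAt_f c₅ c₆ hxt hDxt).comp x ((hasDerivAt_id x).mul_const t)).const_mul t; exact h
  have hune : t * (c₅ / Dd c₅ c₆ (x * t)) ≠ 0 :=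
    mul_ne_zero ht (div_ne_zero hc₅ hDxt)
  have h2 : HasDerivAt (fun x' => (t * (c₅ / Dd c₅ c₆ (x' * t)))⁻¹)
      (-(t * (Fp c₅ c₆ (x * t) * (1 * t))) / (t * (c₅ / Dd c₅ c₆ (x * t))) ^ 2) x :=
    hfx.inv hune
  have h3 : HasDerivAt (fun x' => t * (Fp c₅ c₆ (x' * t) * (1 * t)))
      (t * (Fpp c₅ c₆ (x * t) * (1 * t) * (1 * t))) x :=
    (((hasDerivAt_Fp c₅ c₆ hxt hDxt).comp x
      ((hasDerivAt_id x).mul_const t)).mul_const (1 * t)).const_mul t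
  have htot := (h1.fun_mul h2).fun_mul h3
  rw [htot.deriv]
  -- final algebraic identity
  simp only [Fpp, Fp, Dpp, Dp, Dd]
  set E := Real.exp (c₅ / (x * t)) with hE
  field_simp
  ring_nf
  have h' : -1 + c₆ * E ≠ 0 := fun h => hD0 (by linear_combination (x * t) * h)
  have hq : 1 - c₆ * E * 2 + c₆ ^ 2 * E ^ 2 ≠ 0 := by
    have : 1 - c₆ * E * 2 + c₆ ^ 2 * E ^ 2 = (-1 + c₆ * E) ^ 2 := by ring
    rw [this]; exact pow_ne_zero 2 h'
  field_simp
  ring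
end

section
/- Suppose u : ℝ × ℝ → ℝ is a smooth solution of u_t = (G(x)A(u)u_x)_x + W(t) with G smooth and positive, A smooth with antiderivative Â (Â' = A), and W continuous. Let h(x) = ∫₀ˣ 1/G(y) dy. Define T₂ = (u − ∫₀ᵗ W(s)ds)·h(x) and X₂ = −G(x)A(u)u_x·h(x) + Â(u). Then ∂_t T₂ + ∂ₓ X₂ = 0 on solutions. -/
/-- Second local conservation law of `u_t = (G(x)A(u)u_x)_x + W(t)`:
density `T₂ = (u - ∫₀ᵗ W)·h(x)` with `h(x) = ∫₀ˣ 1/G`, flux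
`X₂ = -G A(u) u_x · h(x) + Â(u)` where `Â' = A`. -/
theorem stmt_3 (G A W Ahat : ℝ → ℝ) (hG : ContDiff ℝ (⊤ : ℕ∞) G) (hGpos : ∀ x, 0 < G x)
    (hA : ContDiff ℝ (⊤ : ℕ∞) A) (hAhat : ∀ s, HasDerivAt Ahat (A s) s) (hW : Continuous W)
    (u : ℝ → ℝ → ℝ) (hu : ContDiff ℝ (⊤ : ℕ∞) (fun p : ℝ × ℝ => u p.1 p.2))
    (hpde : ∀ x t,
      deriv (fun t' => u x t') t =
        deriv (fun x' => G x' * A (u x' t) * deriv (fun y => u y t) x') x + W t)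
    (h : ℝ → ℝ) (T₂ X₂ : ℝ → ℝ → ℝ) (hh : ∀ x, h x = ∫ y in (0:ℝ)..x, 1 / G y)
    (hT₂ : ∀ x t, T₂ x t = (u x t - ∫ s in (0:ℝ)..t, W s) * h x)
    (hX₂ : ∀ x t, X₂ x t =
      -(G x * A (u x t) * deriv (fun y => u y t) x) * h x + Ahat (u x t)) :
    ∀ x t, deriv (fun t' => T₂ x t') t + deriv (fun x' => X₂ x' t) x = 0 := by
  intro x t
  set U : ℝ × ℝ → ℝ := fun p => u p.1 p.2 with hUdef
  set v : ℝ × ℝ → ℝ := fun p => fderiv ℝ U p (1, 0) with hvdef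
  have hv_smooth : ContDiff ℝ (⊤ : ℕ∞) v :=
    (hu.fderiv_right (le_refl _)).clm_apply contDiff_const
  -- partial x derivative
  have hux : ∀ x' t', HasDerivAt (fun y => u y t') (v (x', t')) x' := by
    intro x' t'
    have hF : HasFDerivAt U (fderiv ℝ U (x', t')) (x', t') :=
      (hu.differentiable (by simp) (x', t')).hasFDerivAt
    have hγ : HasDerivAt (fun y : ℝ => (y, t')) ((1 : ℝ), (0 : ℝ)) x' :=
      (hasDerivAt_id x').prodMk (hasDerivAt_const x' t')
    exact hF.comp_hasDerivAt x' hγ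
  -- partial t derivative
  set w : ℝ := fderiv ℝ U (x, t) (0, 1) with hwdef
  have hut : HasDerivAt (fun t' => u x t') w t := by
    have hF : HasFDerivAt U (fderiv ℝ U (x, t)) (x, t) :=
      (hu.differentiable (by simp) (x, t)).hasFDerivAt
    have hγ : HasDerivAt (fun t' : ℝ => (x, t')) ((0 : ℝ), (1 : ℝ)) t :=
      (hasDerivAt_const t x).prodMk (hasDerivAt_id t)
    exact hF.comp_hasDerivAt t hγ
  have hGne : ∀ y, G y ≠ 0 := fun y => (hGpos y).ne'
  -- the flux core Fg
  set Fg : ℝ × ℝ → ℝ := fun p => G p.1 * A (U p) * v p with hFgdef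
  have hFg_smooth : ContDiff ℝ (⊤ : ℕ∞) Fg :=
    ((hG.comp contDiff_fst).mul (hA.comp hu)).mul hv_smooth
  have hFg_eq : ∀ x' t', Fg (x', t') = G x' * A (u x' t') * deriv (fun y => u y t') x' := by
    intro x' t'
    rw [(hux x' t').deriv]
  set D : ℝ := deriv (fun x' => Fg (x', t)) x with hDdef
  have hFx : HasDerivAt (fun x' => Fg (x', t)) D x := by
    have : DifferentiableAt ℝ (fun x' => Fg (x', t)) x := by
      have hγ : ContDiff ℝ (⊤ : ℕ∞) (fun x' : ℝ => (x', t)) := contDiff_id.prodMk contDiff_const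
      exact ((hFg_smooth.comp hγ).differentiable (by simp) x)
    exact this.hasDerivAt
  -- derivative of h
  have hcont : Continuous (fun y => 1 / G y) :=
    continuous_const.div hG.continuous hGne
  have hh' : HasDerivAt h (1 / G x) x := by
    have : HasDerivAt (fun x' => ∫ y in (0:ℝ)..x', 1 / G y) (1 / G x) x :=
      intervalIntegral.integral_hasDerivAt_right (hcont.intervalIntegrable _ _)
        (hcont.stronglyMeasurableAtFilter _ _) hcont.continuousAt
    have heq : h = fun x' => ∫ y in (0:ℝ)..x', 1 / G y := funext hh
    rw [heq]; exact this
  -- time derivative of T₂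
  have hWint : HasDerivAt (fun t' => ∫ s in (0:ℝ)..t', W s) (W t) t :=
    intervalIntegral.integral_hasDerivAt_right (hW.intervalIntegrable _ _)
      (hW.stronglyMeasurableAtFilter _ _) hW.continuousAt
  have hTder : HasDerivAt (fun t' => T₂ x t') ((w - W t) * h x) t := by
    have : HasDerivAt (fun t' => (u x t' - ∫ s in (0:ℝ)..t', W s) * h x)
        ((w - W t) * h x) t := (hut.sub hWint).mul_const (h x)
    have heq : (fun t' => T₂ x t') = fun t' => (u x t' - ∫ s in (0:ℝ)..t', W s) * h x := by
      funext t'; rw [hT₂]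
    rw [heq]; exact this
  -- x derivative of X₂
  have hXder : HasDerivAt (fun x' => X₂ x' t)
      (-(D * h x + Fg (x, t) * (1 / G x)) + A (u x t) * v (x, t)) x := by
    have h1 : HasDerivAt (fun x' => Fg (x', t) * h x')
        (D * h x + Fg (x, t) * (1 / G x)) x := hFx.mul hh'
    have h2 : HasDerivAt (fun x' => Ahat (u x' t)) (A (u x t) * v (x, t)) x :=
      (hAhat (u x t)).comp x (hux x t)
    have h3 := h1.neg.add h2
    have heq : (fun x' => X₂ x' t) = fun x' => -(Fg (x', t) * h x') + Ahat (u x' t) := by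
      funext x'; rw [hX₂, hFg_eq]; ring
    rw [heq]; exact h3
  -- PDE gives w - W t = D
  have hwD : w - W t = D := by
    have h1 := hpde x t
    have h2 : deriv (fun t' => u x t') t = w := hut.deriv
    have h3 : deriv (fun x' => G x' * A (u x' t) * deriv (fun y => u y t) x') x = D := by
      have : (fun x' => G x' * A (u x' t) * deriv (fun y => u y t) x') =
          fun x' => Fg (x', t) := by funext x'; rw [hFg_eq]
      rw [this, ← hDdef]
    rw [h2, h3] at h1
    linarith
  rw [hTder.deriv, hXder.deriv, hwD]
  have hFgval : Fg (x, t) = G x * A (u x t) * v (x, t) := rfl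
  rw [hFgval]
  field_simp [hGne x]
  ring
end

section
/- Fix m ≠ 0, n ∈ ℝ, k ≠ 2, g ∈ {−1,1}. Suppose φ : ℝ → ℝ is a smooth positive solution of the ODE g(ω^k φ^m φ')' + 1 − (n+1)φ − ((mn+m+1)/(k−2))·ω·φ' = 0. Then u(x,t) = t^{n+1}·φ(x·t^{(mn+m+1)/(k−2)}) solves u_t = (g·x^k·u^m·u_x)_x + t^n for t > 0 (on a domain where φ is defined and positive). -/
/-- Lie reduction with `A(u)=u^m`, `G(x)=g x^k`, `W(t)=t^n`: if `φ` solves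
`g(ω^k φ^m φ')' + 1 - (n+1)φ - ((mn+m+1)/(k-2)) ω φ' = 0`, then
`u(x,t) = t^{n+1} φ(x t^{(mn+m+1)/(k-2)})` solves `u_t = (g x^k u^m u_x)_x + t^n`. -/
theorem stmt_13 (m n k g : ℝ) (hm : m ≠ 0) (hk : k ≠ 2) (hg : g = -1 ∨ g = 1)
    (φ : ℝ → ℝ) (hφ : ContDiff ℝ (⊤ : ℕ∞) φ) (hφpos : ∀ ω > (0:ℝ), 0 < φ ω)
    (hode : ∀ ω > (0:ℝ),
      g * deriv (fun ω' => ω' ^ k * φ ω' ^ m * deriv φ ω') ω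
        + 1 - (n + 1) * φ ω - ((m * n + m + 1) / (k - 2)) * ω * deriv φ ω = 0)
    (u : ℝ → ℝ → ℝ)
    (hu : ∀ x t, u x t = t ^ (n + 1) * φ (x * t ^ ((m * n + m + 1) / (k - 2)))) :
    ∀ x > (0:ℝ), ∀ t > (0:ℝ),
      deriv (fun t' => u x t') t =
        deriv (fun x' => g * x' ^ k * u x' t ^ m * deriv (fun y => u y t) x') x
          + t ^ n := by
  intro x hx t ht
  have ht0 : t ≠ 0 := ne_of_gt ht
  have hk2 : k - 2 ≠ 0 := sub_ne_zero.mpr hk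
  set α := (m * n + m + 1) / (k - 2) with hαdef
  have hkey : α * (k - 2) = m * n + m + 1 := div_mul_cancel₀ _ hk2
  have htα : (0:ℝ) < t ^ α := Real.rpow_pos_of_pos ht α
  set ω := x * t ^ α with hω
  have hω0 : 0 < ω := mul_pos hx htα
  have hφd : Differentiable ℝ φ := hφ.differentiable (by simp)
  have hphiI : ContDiff ℝ ((⊤:ℕ∞) : WithTop ℕ∞) φ := hφ.of_le (by simp)
  have hφ'd : Differentiable ℝ (deriv φ) :=
    (contDiff_infty_iff_deriv.mp hphiI).2.differentiable (by simp)
  -- time derivative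
  have h2 : HasDerivAt (fun t' : ℝ => x * t' ^ α) (x * (α * t ^ (α - 1))) t :=
    (Real.hasDerivAt_rpow_const (Or.inl ht0)).const_mul x
  have h3 : HasDerivAt (fun t' : ℝ => φ (x * t' ^ α))
      (deriv φ ω * (x * (α * t ^ (α - 1)))) t := by
    exact ((hφd ω).hasDerivAt.comp t h2)
  have h1 : HasDerivAt (fun t' : ℝ => t' ^ (n + 1)) ((n + 1) * t ^ n) t := by
    simpa [add_sub_cancel_right] using Real.hasDerivAt_rpow_const (p := n + 1) (Or.inl ht0)
  have hL : deriv (fun t' => u x t') t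
      = (n + 1) * t ^ n * φ ω + t ^ (n + 1) * (deriv φ ω * (x * (α * t ^ (α - 1)))) := by
    have he : (fun t' => u x t') = fun t' => t' ^ (n + 1) * φ (x * t' ^ α) :=
      funext fun t' => hu x t'
    rw [he]
    exact (h1.mul h3).deriv
  -- spatial derivative of u
  have hux : ∀ x' : ℝ, deriv (fun y => u y t) x'
      = t ^ (n + 1) * (deriv φ (x' * t ^ α) * t ^ α) := by
    intro x'
    have h4 : HasDerivAt (fun y : ℝ => y * t ^ α) (t ^ α) x' := hasDerivAt_mul_const _
    have h5 : HasDerivAt (fun y : ℝ => φ (y * t ^ α))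
        (deriv φ (x' * t ^ α) * t ^ α) x' := by
      exact ((hφd (x' * t ^ α)).hasDerivAt.comp x' h4)
    have he : (fun y => u y t) = fun y => t ^ (n + 1) * φ (y * t ^ α) :=
      funext fun y => hu y t
    rw [he]
    exact (h5.const_mul _).deriv
  set P : ℝ → ℝ := fun ω' => ω' ^ k * φ ω' ^ m * deriv φ ω' with hP
  -- the flux function agrees with a composed form near x
  have hEq : (fun x' => g * x' ^ k * u x' t ^ m * deriv (fun y => u y t) x')
      =ᶠ[nhds x] (fun x' => g * t ^ (n - α) * P (x' * t ^ α)) := by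
    filter_upwards [eventually_gt_nhds hx] with x' hx'
    have hω' : (0:ℝ) < x' * t ^ α := mul_pos hx' htα
    rw [hux x', hu x' t]
    have e1 : (t ^ (n + 1) * φ (x' * t ^ α)) ^ m
        = t ^ ((n + 1) * m) * φ (x' * t ^ α) ^ m := by
      rw [Real.mul_rpow (Real.rpow_nonneg ht.le _) (hφpos _ hω').le,
        ← Real.rpow_mul ht.le]
    have e2 : (x' * t ^ α) ^ k = x' ^ k * t ^ (α * k) := by
      rw [Real.mul_rpow hx'.le htα.le, ← Real.rpow_mul ht.le]
    have e3 : t ^ ((n + 1) * m) * (t ^ (n + 1) * t ^ α) = t ^ (n - α) * t ^ (α * k) := by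
      rw [← Real.rpow_add ht, ← Real.rpow_add ht, ← Real.rpow_add ht]
      congr 1
      linear_combination -hkey
    simp only [hP]
    rw [e1, e2]
    linear_combination (g * x' ^ k * φ (x' * t ^ α) ^ m * deriv φ (x' * t ^ α)) * e3
  have hPd : DifferentiableAt ℝ P ω := by
    apply DifferentiableAt.mul
    apply DifferentiableAt.mul
    · exact (differentiableAt_id).rpow_const (Or.inl hω0.ne')
    · exact (hφd ω).rpow_const (Or.inl (hφpos ω hω0).ne')
    · exact hφ'd ω
  have h6 : HasDerivAt (fun x' => g * t ^ (n - α) * P (x' * t ^ α))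
      (g * t ^ (n - α) * (deriv P ω * t ^ α)) x := by
    have h7 : HasDerivAt (fun x' : ℝ => x' * t ^ α) (t ^ α) x := hasDerivAt_mul_const _
    have := (hPd.hasDerivAt.comp x h7).const_mul (g * t ^ (n - α))
    simpa [Function.comp] using this
  have hR : deriv (fun x' => g * x' ^ k * u x' t ^ m * deriv (fun y => u y t) x') x
      = g * t ^ (n - α) * (deriv P ω * t ^ α) := by
    rw [hEq.deriv_eq]
    exact h6.deriv
  rw [hL, hR]
  have eB : t ^ (n - α) * t ^ α = t ^ n := by
    rw [← Real.rpow_add ht, sub_add_cancel]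
  have eA : t ^ (n + 1) * t ^ (α - 1) = t ^ n * t ^ α := by
    rw [← Real.rpow_add ht, ← Real.rpow_add ht]
    congr 1
    ring
  have hode' := hode ω hω0
  linear_combination (-(t ^ n)) * hode' + (α * x * deriv φ ω) * eA
    + (-(g * deriv P ω)) * eB + (-(α * deriv φ ω * t ^ n)) * hω
end

section
/- Fix m ∉ {0, −1}, and a, b ∈ ℝ with b ≠ 0. Suppose φ is a smooth positive solution of (ω²φ^m φ')' + 1 + (1/m)φ + (a/(bm))·ω·φ' = 0. Then u(x,t) = t^{−1/m}·φ(x·t^{−a/(bm)}) solves u_t = (x²·u^m·u_x)_x + t^{−(m+1)/m} for t, x > 0. -/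
/-- Reduction for quadratic mass density: if `φ` solves
`(ω²φ^m φ')' + 1 + (1/m)φ + (a/(bm)) ω φ' = 0`, then
`u(x,t) = t^{-1/m} φ(x t^{-a/(bm)})` solves `u_t = (x² u^m u_x)_x + t^{-(m+1)/m}`. -/
theorem stmt_15 (m a b : ℝ) (hm : m ≠ 0) (hm' : m ≠ -1) (hb : b ≠ 0)
    (φ : ℝ → ℝ) (hφ : ContDiff ℝ (⊤ : ℕ∞) φ) (hφpos : ∀ ω > (0:ℝ), 0 < φ ω)
    (hode : ∀ ω > (0:ℝ),
      deriv (fun ω' => ω' ^ 2 * φ ω' ^ m * deriv φ ω') ω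
        + 1 + (1 / m) * φ ω + (a / (b * m)) * ω * deriv φ ω = 0)
    (u : ℝ → ℝ → ℝ)
    (hu : ∀ x t, u x t = t ^ (-1 / m) * φ (x * t ^ (-a / (b * m)))) :
    ∀ x > (0:ℝ), ∀ t > (0:ℝ),
      deriv (fun t' => u x t') t =
        deriv (fun x' => x' ^ 2 * u x' t ^ m * deriv (fun y => u y t) x') x
          + t ^ (-(m + 1) / m) := by
  intro x hx t ht
  have hφd : Differentiable ℝ φ := hφ.differentiable (by simp)
  have hφ'd : Differentiable ℝ (deriv φ) :=
    (contDiff_infty_iff_deriv.mp (hφ.of_le (by simp))).2.differentiable (by simp)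
  have ht0 : t ≠ 0 := ht.ne'
  set p : ℝ := -1 / m with hp
  set e : ℝ := -a / (b * m) with he
  have hs : (0:ℝ) < t ^ e := Real.rpow_pos_of_pos ht e
  have hωpos : 0 < x * t ^ e := mul_pos hx hs
  -- x-derivative of u(·, t)
  have hdx : ∀ x' : ℝ, deriv (fun y => u y t) x'
      = t ^ p * (deriv φ (x' * t ^ e) * t ^ e) := by
    intro x'
    have hfn : (fun y => u y t) = fun y => t ^ p * φ (y * t ^ e) := by
      funext y; rw [hu]
    rw [hfn]
    have h1 : HasDerivAt (fun y : ℝ => y * t ^ e) (t ^ e) x' := hasDerivAt_mul_const _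
    have h2 : HasDerivAt φ (deriv φ (x' * t ^ e)) (x' * t ^ e) := (hφd _).hasDerivAt
    exact ((h2.comp x' h1).const_mul (t ^ p)).deriv
  -- differentiability of G
  have hG : DifferentiableAt ℝ (fun ω' => ω' ^ 2 * φ ω' ^ m * deriv φ ω') (x * t ^ e) := by
    have d1 : DifferentiableAt ℝ (fun ω' : ℝ => ω' ^ 2) (x * t ^ e) := differentiableAt_pow 2
    have d2 : DifferentiableAt ℝ (fun ω' => φ ω' ^ m) (x * t ^ e) := by
      have hout : HasDerivAt (fun y : ℝ => y ^ m)
          (m * φ (x * t ^ e) ^ (m - 1)) (φ (x * t ^ e)) :=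
        Real.hasDerivAt_rpow_const (Or.inl (hφpos _ hωpos).ne')
      exact hout.differentiableAt.comp _ (hφd _)
    exact (d1.mul d2).mul (hφ'd _)
  set K : ℝ := t ^ p / t / t ^ e with hK
  have hpmul : p * m = -1 := by rw [hp]; field_simp
  have hpm : (t ^ p) ^ m = t⁻¹ := by
    rw [← Real.rpow_mul ht.le, hpmul, Real.rpow_neg_one]
  -- local rewrite of the flux function
  have hfeq : (fun x' => x' ^ 2 * u x' t ^ m * deriv (fun y => u y t) x')
      =ᶠ[nhds x] fun x' =>
        K * ((x' * t ^ e) ^ 2 * φ (x' * t ^ e) ^ m * deriv φ (x' * t ^ e)) := by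
    filter_upwards [eventually_gt_nhds hx] with x' hx'
    rw [hu, hdx]
    have hω' : 0 < x' * t ^ e := mul_pos hx' hs
    rw [Real.mul_rpow (Real.rpow_pos_of_pos ht p).le (hφpos _ hω').le, hpm]
    rw [hK, mul_pow]
    field_simp
  have hrx : deriv (fun x' => x' ^ 2 * u x' t ^ m * deriv (fun y => u y t) x') x
      = K * (deriv (fun ω' => ω' ^ 2 * φ ω' ^ m * deriv φ ω') (x * t ^ e) * t ^ e) := by
    rw [hfeq.deriv_eq]
    have h1 : HasDerivAt (fun x' : ℝ => x' * t ^ e) (t ^ e) x := hasDerivAt_mul_const _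
    exact ((hG.hasDerivAt.comp x h1).const_mul K).deriv
  -- t-derivative of u(x, ·)
  have hL : deriv (fun t' => u x t') t
      = p * t ^ (p - 1) * φ (x * t ^ e)
        + t ^ p * (deriv φ (x * t ^ e) * (x * (e * t ^ (e - 1)))) := by
    have hfn : (fun t' => u x t') = fun t' => t' ^ p * φ (x * t' ^ e) := by
      funext t'; rw [hu]
    rw [hfn]
    have h1 : HasDerivAt (fun t' : ℝ => t' ^ p) (p * t ^ (p - 1)) t :=
      Real.hasDerivAt_rpow_const (Or.inl ht0)
    have h2 : HasDerivAt (fun t' : ℝ => x * t' ^ e) (x * (e * t ^ (e - 1))) t :=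
      (Real.hasDerivAt_rpow_const (Or.inl ht0)).const_mul x
    have h3 : HasDerivAt φ (deriv φ (x * t ^ e)) (x * t ^ e) := (hφd _).hasDerivAt
    exact (h1.mul (h3.comp t h2)).deriv
  rw [hL, hrx]
  have hGval : deriv (fun ω' => ω' ^ 2 * φ ω' ^ m * deriv φ ω') (x * t ^ e)
      = -1 - (1 / m) * φ (x * t ^ e) - (a / (b * m)) * (x * t ^ e) * deriv φ (x * t ^ e) := by
    have := hode _ hωpos
    linarith
  rw [hGval, hK]
  have h1 : t ^ (p - 1) = t ^ p / t := by
    rw [Real.rpow_sub ht, Real.rpow_one]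
  have h2 : t ^ (e - 1) = t ^ e / t := by
    rw [Real.rpow_sub ht, Real.rpow_one]
  have h3 : t ^ (-(m + 1) / m) = t ^ p / t := by
    rw [← h1]
    congr 1
    rw [hp]; field_simp; ring
  rw [h1, h2, h3, hp, he]
  have hsne : t ^ e ≠ 0 := hs.ne'
  rw [he] at hsne
  field_simp
  ring
end

section
/- Let c₅, c₆ ∈ ℝ, u_∞ ∈ ℝ, and let Ei denote the exponential integral. Define f(φ) = 1/(−1 + (c₆/φ)e^{−c₆/φ}·Ei(c₆/φ) + (c₅/φ)e^{−c₆/φ}) and u(x,t) = u_∞ − t·f(xt). Then on any open region where xt > 0 and the denominator of f is nonzero, u satisfies u_t = (x²·(u_∞ − u)^{−1}·u_x)_x + 1. -/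
noncomputable def DDx (c₅ c₆ : ℝ) (Ei : ℝ → ℝ) (φ : ℝ) : ℝ :=
  -1 + c₆ / φ * Real.exp (-c₆ / φ) * Ei (c₆ / φ) + c₅ / φ * Real.exp (-c₆ / φ)

noncomputable def D1x (c₅ c₆ : ℝ) (Ei : ℝ → ℝ) (φ : ℝ) : ℝ :=
  c₆ * φ⁻¹ * (c₆ * φ⁻¹ - 1) * φ⁻¹ * Real.exp (-c₆ / φ) * Ei (c₆ / φ)
    - c₆ * φ⁻¹ * φ⁻¹
    + c₅ * (c₆ * φ⁻¹ - 1) * φ⁻¹ * φ⁻¹ * Real.exp (-c₆ / φ)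

noncomputable def D2x (c₅ c₆ : ℝ) (Ei : ℝ → ℝ) (φ : ℝ) : ℝ :=
  (c₆^3/φ^5 - 4*c₆^2/φ^4 + 2*c₆/φ^3) * Real.exp (-c₆ / φ) * Ei (c₆ / φ)
    + (-c₆^2/φ^4 + 3*c₆/φ^3)
    + (c₅*c₆^2/φ^5 - 4*c₅*c₆/φ^4 + 2*c₅/φ^3) * Real.exp (-c₆ / φ)

theorem master_id (c₅ c₆ : ℝ) (Ei : ℝ → ℝ) (φ : ℝ) (hφ : φ ≠ 0) :
    φ^2 * D2x c₅ c₆ Ei φ * DDx c₅ c₆ Ei φ - φ^2 * (D1x c₅ c₆ Ei φ)^2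
      + 2*φ*(D1x c₅ c₆ Ei φ)*(DDx c₅ c₆ Ei φ) - φ*(D1x c₅ c₆ Ei φ)
      + (DDx c₅ c₆ Ei φ)^2 + DDx c₅ c₆ Ei φ = 0 := by
  unfold DDx D1x D2x
  field_simp
  ring

theorem hasDerivAt_DDx (c₅ c₆ : ℝ) (Ei : ℝ → ℝ)
    (hEi : ∀ x : ℝ, x ≠ 0 → HasDerivAt Ei (Real.exp x / x) x)
    (φ : ℝ) (hφ : φ ≠ 0) :
    HasDerivAt (DDx c₅ c₆ Ei) (D1x c₅ c₆ Ei φ) φ := by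
  have hinv : HasDerivAt (fun ψ : ℝ => ψ⁻¹) (-(φ^2)⁻¹) φ := hasDerivAt_inv hφ
  have hq5 : HasDerivAt (fun ψ : ℝ => c₅ / ψ) (c₅ * -(φ^2)⁻¹) φ := by
    simpa [div_eq_mul_inv] using hinv.const_mul c₅
  have hq : HasDerivAt (fun ψ : ℝ => c₆ / ψ) (c₆ * -(φ^2)⁻¹) φ := by
    simpa [div_eq_mul_inv] using hinv.const_mul c₆
  have hnq : HasDerivAt (fun ψ : ℝ => -c₆ / ψ) (-c₆ * -(φ^2)⁻¹) φ := by
    simpa [div_eq_mul_inv] using hinv.const_mul (-c₆)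
  have hexp : HasDerivAt (fun ψ : ℝ => Real.exp (-c₆ / ψ))
      (Real.exp (-c₆ / φ) * (-c₆ * -(φ^2)⁻¹)) φ := hnq.exp
  rcases eq_or_ne c₆ 0 with rfl | hc
  · have hEq : DDx c₅ 0 Ei = fun ψ : ℝ => -1 + 0 + c₅ / ψ * Real.exp (-0 / ψ) := by
      funext ψ; simp [DDx]
    rw [hEq]
    have h := ((hq5.mul hexp).const_add (-1 + 0))
    refine HasDerivAt.congr_deriv h ?_
    unfold D1x
    norm_num
    rw [sq, mul_inv]; ring
  · have hs : c₆ / φ ≠ 0 := div_ne_zero hc hφ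
    have hEic : HasDerivAt (fun ψ : ℝ => Ei (c₆ / ψ))
        (Real.exp (c₆ / φ) / (c₆ / φ) * (c₆ * -(φ^2)⁻¹)) φ := (hEi _ hs).comp φ hq
    have h := (((hq.mul hexp).mul hEic).const_add (-1)).add (hq5.mul hexp)
    simp only [Pi.mul_apply] at h
    have hEq : DDx c₅ c₆ Ei = fun ψ : ℝ =>
        (-1 + c₆ / ψ * Real.exp (-c₆ / ψ) * Ei (c₆ / ψ)) + c₅ / ψ * Real.exp (-c₆ / ψ) := by
      funext ψ; simp [DDx]
    rw [hEq]
    refine HasDerivAt.congr_deriv h ?_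
    unfold D1x
    rw [neg_div, Real.exp_neg]
    field_simp
    ring

set_option maxHeartbeats 1000000 in
theorem hasDerivAt_D1x (c₅ c₆ : ℝ) (Ei : ℝ → ℝ)
    (hEi : ∀ x : ℝ, x ≠ 0 → HasDerivAt Ei (Real.exp x / x) x)
    (φ : ℝ) (hφ : φ ≠ 0) :
    HasDerivAt (D1x c₅ c₆ Ei) (D2x c₅ c₆ Ei φ) φ := by
  have hinv : HasDerivAt (fun ψ : ℝ => ψ⁻¹) (-(φ^2)⁻¹) φ := hasDerivAt_inv hφ
  have hq : HasDerivAt (fun ψ : ℝ => c₆ / ψ) (c₆ * -(φ^2)⁻¹) φ := by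
    simpa [div_eq_mul_inv] using hinv.const_mul c₆
  have hnq : HasDerivAt (fun ψ : ℝ => -c₆ / ψ) (-c₆ * -(φ^2)⁻¹) φ := by
    simpa [div_eq_mul_inv] using hinv.const_mul (-c₆)
  have hexp : HasDerivAt (fun ψ : ℝ => Real.exp (-c₆ / ψ))
      (Real.exp (-c₆ / φ) * (-c₆ * -(φ^2)⁻¹)) φ := hnq.exp
  have him : HasDerivAt (fun ψ : ℝ => c₆ * ψ⁻¹) (c₆ * -(φ^2)⁻¹) φ := hinv.const_mul c₆
  rcases eq_or_ne c₆ 0 with rfl | hc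
  · have hEq : D1x c₅ 0 Ei = fun ψ => -(c₅ * ψ⁻¹ * ψ⁻¹) := by
      funext ψ; unfold D1x; norm_num
    rw [hEq]
    have h := (((hinv.const_mul c₅).mul hinv).neg)
    refine HasDerivAt.congr_deriv h ?_
    unfold D2x
    norm_num
    field_simp
    ring
  · have hs : c₆ / φ ≠ 0 := div_ne_zero hc hφ
    have hEic : HasDerivAt (fun ψ : ℝ => Ei (c₆ / ψ))
        (Real.exp (c₆ / φ) / (c₆ / φ) * (c₆ * -(φ^2)⁻¹)) φ := (hEi _ hs).comp φ hq
    have hX := (((him.mul (him.sub_const 1)).mul hinv).mul hexp).mul hEic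
    have hY := him.mul hinv
    have hZ := ((((him.sub_const 1).const_mul c₅).mul hinv).mul hinv).mul hexp
    have h := (hX.sub hY).add hZ
    simp only [Pi.mul_apply] at h
    unfold D1x
    refine HasDerivAt.congr_deriv h ?_
    unfold D2x
    rw [neg_div, Real.exp_neg]
    field_simp
    ring

set_option maxHeartbeats 1000000 in
/-- Two-parameter focussing solution with exponential integral:
`u = u_∞ - t f(xt)`, `f(φ) = 1/(-1 + (c₆/φ)e^{-c₆/φ}Ei(c₆/φ) + (c₅/φ)e^{-c₆/φ})`,
solves `u_t = (x² (u_∞ - u)⁻¹ u_x)_x + 1`. -/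
theorem stmt_17 (c₅ c₆ uinf : ℝ) (Ei : ℝ → ℝ)
    (hEi : ∀ x : ℝ, x ≠ 0 → HasDerivAt Ei (Real.exp x / x) x)
    (f : ℝ → ℝ)
    (hf : ∀ φ, f φ = 1 / (-1 + (c₆ / φ) * Real.exp (-c₆ / φ) * Ei (c₆ / φ)
      + (c₅ / φ) * Real.exp (-c₆ / φ)))
    (u : ℝ → ℝ → ℝ) (hu : ∀ x t, u x t = uinf - t * f (x * t)) :
    ∀ x t, 0 < x * t →
      (-1 + (c₆ / (x * t)) * Real.exp (-c₆ / (x * t)) * Ei (c₆ / (x * t))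
        + (c₅ / (x * t)) * Real.exp (-c₆ / (x * t))) ≠ 0 →
      deriv (fun t' => u x t') t =
        deriv (fun x' => x' ^ 2 * (uinf - u x' t)⁻¹ * deriv (fun y => u y t) x') x
          + 1 := by
  intro x t hxt hD0
  have ht : t ≠ 0 := by rintro rfl; simp at hxt
  have hx : x ≠ 0 := by rintro rfl; simp at hxt
  have hφ : x * t ≠ 0 := ne_of_gt hxt
  have hD : DDx c₅ c₆ Ei (x * t) ≠ 0 := hD0
  have hfD : ∀ ψ, f ψ = 1 / DDx c₅ c₆ Ei ψ := hf
  -- derivative of f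
  have hfder : ∀ ψ, ψ ≠ 0 → DDx c₅ c₆ Ei ψ ≠ 0 →
      HasDerivAt f (-D1x c₅ c₆ Ei ψ / DDx c₅ c₆ Ei ψ ^ 2) ψ := by
    intro ψ h1 h2
    have hfun : f = fun ψ => 1 / DDx c₅ c₆ Ei ψ := funext hfD
    rw [hfun]
    have h := (hasDerivAt_const ψ (1:ℝ)).div (hasDerivAt_DDx c₅ c₆ Ei hEi ψ h1) h2
    refine HasDerivAt.congr_deriv h ?_
    ring
  -- time derivative
  have hmulx : HasDerivAt (fun t' : ℝ => x * t') x t := by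
    simpa using (hasDerivAt_id t).const_mul x
  have hft : HasDerivAt (fun t' => f (x * t'))
      (-D1x c₅ c₆ Ei (x * t) / DDx c₅ c₆ Ei (x * t) ^ 2 * x) t :=
    (hfder (x * t) hφ hD).comp t hmulx
  have hfun : (fun t' => u x t') = fun t' => uinf - t' * f (x * t') :=
    funext fun t' => hu x t'
  have hL : HasDerivAt (fun t' => uinf - t' * f (x * t'))
      (-(1 * f (x * t) + t * (-D1x c₅ c₆ Ei (x * t) / DDx c₅ c₆ Ei (x * t) ^ 2 * x))) t :=
    ((hasDerivAt_id t).mul hft).const_sub uinf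
  rw [hfun, hL.deriv]
  -- spatial derivative of u
  have hUder : ∀ x' : ℝ, x' * t ≠ 0 → DDx c₅ c₆ Ei (x' * t) ≠ 0 →
      HasDerivAt (fun y => u y t)
        (-(t * (-D1x c₅ c₆ Ei (x' * t) / DDx c₅ c₆ Ei (x' * t) ^ 2 * t))) x' := by
    intro x' h1 h2
    have hfun2 : (fun y => u y t) = fun y => uinf - t * f (y * t) :=
      funext fun y => hu y t
    rw [hfun2]
    exact (((hfder (x' * t) h1 h2).comp x' (hasDerivAt_mul_const t)).const_mul t).const_sub uinf
  -- eventual equality of the flux function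
  have hev1 : ∀ᶠ x' in nhds x, DDx c₅ c₆ Ei (x' * t) ≠ 0 := by
    have hc1 : ContinuousAt (DDx c₅ c₆ Ei) (x * t) :=
      (hasDerivAt_DDx c₅ c₆ Ei hEi (x * t) hφ).continuousAt
    have hc2 : ContinuousAt (fun x' : ℝ => x' * t) x :=
      (continuous_mul_right t).continuousAt
    have hcontD : ContinuousAt (fun x' : ℝ => DDx c₅ c₆ Ei (x' * t)) x := ContinuousAt.comp (f := fun x' : ℝ => x' * t) hc1 hc2
    exact hcontD.eventually_ne hD
  have hev2 : ∀ᶠ x' in nhds x, x' * t ≠ 0 :=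
    ((continuous_mul_right t).continuousAt).eventually_ne hφ
  have hEvEq : (fun x' => x' ^ 2 * (uinf - u x' t)⁻¹ * deriv (fun y => u y t) x')
      =ᶠ[nhds x] (fun x' => x' ^ 2 * (t * f (x' * t))⁻¹ *
        (-(t * (-D1x c₅ c₆ Ei (x' * t) / DDx c₅ c₆ Ei (x' * t) ^ 2 * t)))) := by
    filter_upwards [hev1, hev2] with x' h1 h2
    rw [(hUder x' h2 h1).deriv]
    have hWU : uinf - u x' t = t * f (x' * t) := by rw [hu]; ring
    rw [hWU]
  -- derivative of the explicit flux function
  have hfx : f (x * t) ≠ 0 := by rw [hfD]; exact one_div_ne_zero hD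
  have htf : t * f (x * t) ≠ 0 := mul_ne_zero ht hfx
  have hB2 : HasDerivAt (fun x' => t * f (x' * t))
      (t * (-D1x c₅ c₆ Ei (x * t) / DDx c₅ c₆ Ei (x * t) ^ 2 * t)) x :=
    ((hfder (x * t) hφ hD).comp x (hasDerivAt_mul_const t)).const_mul t
  have hBinv : HasDerivAt (fun x' => (t * f (x' * t))⁻¹)
      (-(t * (-D1x c₅ c₆ Ei (x * t) / DDx c₅ c₆ Ei (x * t) ^ 2 * t)) / (t * f (x * t)) ^ 2) x :=
    hB2.inv htf
  have hF1 : HasDerivAt (fun ψ => -D1x c₅ c₆ Ei ψ / DDx c₅ c₆ Ei ψ ^ 2)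
      ((-D2x c₅ c₆ Ei (x * t) * DDx c₅ c₆ Ei (x * t) ^ 2 -
        -D1x c₅ c₆ Ei (x * t) *
          (((2:ℕ):ℝ) * DDx c₅ c₆ Ei (x * t) ^ (2 - 1) * D1x c₅ c₆ Ei (x * t))) /
        (DDx c₅ c₆ Ei (x * t) ^ 2) ^ 2) (x * t) :=
    ((hasDerivAt_D1x c₅ c₆ Ei hEi (x * t) hφ).neg).div
      ((hasDerivAt_DDx c₅ c₆ Ei hEi (x * t) hφ).pow 2) (pow_ne_zero 2 hD)
  have hC' : HasDerivAt
      (fun x' => -(t * (-D1x c₅ c₆ Ei (x' * t) / DDx c₅ c₆ Ei (x' * t) ^ 2 * t)))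
      (-(t * ((-D2x c₅ c₆ Ei (x * t) * DDx c₅ c₆ Ei (x * t) ^ 2 -
        -D1x c₅ c₆ Ei (x * t) *
          (((2:ℕ):ℝ) * DDx c₅ c₆ Ei (x * t) ^ (2 - 1) * D1x c₅ c₆ Ei (x * t))) /
        (DDx c₅ c₆ Ei (x * t) ^ 2) ^ 2 * t * t))) x :=
    by have := (((hF1.comp x (hasDerivAt_mul_const t)).mul_const t).const_mul t).neg; exact this
  have hG := ((hasDerivAt_pow 2 x).mul hBinv).mul hC'
  have hR := hG.congr_of_eventuallyEq hEvEq
  simp only [Pi.mul_apply] at hR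
  rw [hR.deriv]
  -- algebra
  have hfv : f (x * t) = 1 / DDx c₅ c₆ Ei (x * t) := hf (x * t)
  have hM := master_id c₅ c₆ Ei (x * t) hφ
  have hCC : D2x c₅ c₆ Ei (x * t) =
      ((x * t) ^ 2 * (D1x c₅ c₆ Ei (x * t)) ^ 2
        - 2 * (x * t) * D1x c₅ c₆ Ei (x * t) * DDx c₅ c₆ Ei (x * t)
        + (x * t) * D1x c₅ c₆ Ei (x * t)
        - DDx c₅ c₆ Ei (x * t) ^ 2 - DDx c₅ c₆ Ei (x * t)) /
      ((x * t) ^ 2 * DDx c₅ c₆ Ei (x * t)) := by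
    rw [eq_div_iff (mul_ne_zero (pow_ne_zero 2 hφ) hD)]
    linear_combination hM
  rw [hfv, hCC]
  norm_num
  have hD' : DDx c₅ c₆ Ei (t * x) ≠ 0 := by rwa [mul_comm]
  field_simp
  ring
end
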